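/- arXiv:2209.13581 — 3 statements merged into one kernel-verified Lean document; each statement's English description precedes it below -/
import Mathlib

section
/- For simplicial complexes X and Y, and σ an i-simplex of X, τ a j-simplex of Y with i+j = k−1, the combinatorial Laplacian of the join satisfies Δ_k^{X∗Y}(σ ⊗ τ) = (Δ_i^X σ) ⊗ τ + σ ⊗ (Δ_j^Y τ). -/
/-!
Both `∂` and `∂†` satisfy a graded Leibniz rule on the join,
`d (σ ⊗ τ) = d σ ⊗ τ + (-1) ^ |σ| σ ⊗ d τ`: in the order of `Lex (V ⊕ W)` every vertex of `σ`
precedes every vertex of `τ`, so removing or inserting a vertex on the `τ` side picks up the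
extra sign `(-1) ^ |σ|`, and a face `σ' ∪ τ'` lies in `X ∗ Y` exactly when `σ' ∈ X` and
`τ' ∈ Y`. Expanding `Δ = ∂†∂ + ∂∂†` with these rules, the mixed terms `∂σ ⊗ ∂†τ` and
`∂†σ ⊗ ∂τ` occur twice with opposite signs, and the remaining terms are `Δσ ⊗ τ + σ ⊗ Δτ`.
-/

open Finsupp

attribute [local instance] Classical.propDecidable

variable (F : Type*) [Field F]
variable {V : Type*} [Fintype V] [LinearOrder V]

/-- The space of `F`-chains on the faces of cardinality `c` of the abstract simplicial
complex `K` (a face of cardinality `c` is a simplex of dimension `c − 1`; cardinality `0`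
gives the `(−1)`-dimensional simplex `∅` of the reduced chain complex). -/
abbrev Cc (K : Finset V → Prop) (c : ℕ) : Type _ :=
  {s : Finset V // s.card = c ∧ K s} →₀ F

/-- The boundary map `∂ : C_c → C_{c-1}` (in cardinality indexing) of the reduced chain
complex of `K`: a face maps to the alternating sum of its codimension-one subfaces, with
sign given by the position (in the ordering of `V`) of the removed vertex. -/
noncomputable def downC (K : Finset V → Prop) (c : ℕ) :
    Cc F K (c + 1) →ₗ[F] Cc F K c :=
  Finsupp.lsum F fun s => LinearMap.toSpanSingleton F _
    (∑ a ∈ s.1.attach,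
      if h : K (s.1.erase a.1) then
        ((-1 : F) ^ ((s.1.filter fun b => b < a.1).card)) •
          Finsupp.single
            (⟨s.1.erase a.1, by rw [Finset.card_erase_of_mem a.2, s.2.1]; omega, h⟩ :
              {s : Finset V // s.card = c ∧ K s}) 1
      else 0)

/-- The coboundary map `∂† : C_c → C_{c+1}`, the adjoint of `downC` with respect to the
inner product making the faces an orthonormal basis: a face maps to the signed sum of the
faces of `K` obtained by inserting one vertex. -/
noncomputable def upC (K : Finset V → Prop) (c : ℕ) :
    Cc F K c →ₗ[F] Cc F K (c + 1) :=
  Finsupp.lsum F fun t => LinearMap.toSpanSingleton F _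
    (∑ a : V,
      if h : a ∉ t.1 ∧ K (insert a t.1) then
        ((-1 : F) ^ ((t.1.filter fun b => b < a).card)) •
          Finsupp.single
            (⟨insert a t.1, by rw [Finset.card_insert_of_notMem h.1, t.2.1], h.2⟩ :
              {s : Finset V // s.card = c + 1 ∧ K s}) 1
      else 0)

/-- The combinatorial Laplacian `Δ = ∂†∂ + ∂∂†` of the reduced chain complex of `K`,
acting on chains of faces of cardinality `c` (i.e. simplices of dimension `c − 1`). -/
noncomputable def lapCard (K : Finset V → Prop) : (c : ℕ) → Cc F K c →ₗ[F] Cc F K c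
  | 0 => downC F K 0 ∘ₗ upC F K 0
  | (d + 1) => upC F K d ∘ₗ downC F K d + downC F K (d + 1) ∘ₗ upC F K (d + 1)

/-- The reduced Betti number `β̃_{c-1}` of `K` (in cardinality indexing: `redBettiC K c`
is the Betti number of dimension `c − 1`): the dimension of the kernel of the boundary map
out of the cardinality-`c` chains minus the rank of the boundary map into them. -/
noncomputable def redBettiC (K : Finset V → Prop) : ℕ → ℕ
  | 0 => Module.finrank F (Cc F K 0) -
      Module.finrank F (LinearMap.range (downC F K 0))
  | (d + 1) => Module.finrank F (LinearMap.ker (downC F K d)) -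
      Module.finrank F (LinearMap.range (downC F K (d + 1)))

section Join

variable {W : Type*} [Fintype W] [LinearOrder W]

noncomputable instance : Fintype (Lex (V ⊕ W)) := Fintype.ofEquiv (V ⊕ W) toLex

/-- Embedding of the left vertex set into the (lexicographically ordered) disjoint
union of the vertex sets, in which all left vertices precede all right vertices. -/
def embL : V ↪ Lex (V ⊕ W) :=
  ⟨fun v => toLex (Sum.inl v), fun _ _ h => Sum.inl_injective (toLex.injective h)⟩

/-- Embedding of the right vertex set into the disjoint union. -/
def embR : W ↪ Lex (V ⊕ W) :=
  ⟨fun w => toLex (Sum.inr w), fun _ _ h => Sum.inr_injective (toLex.injective h)⟩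

lemma mapEmb_disjoint (s : Finset V) (t : Finset W) :
    Disjoint (s.map embL) (t.map (embR : W ↪ Lex (V ⊕ W))) := by
  rw [Finset.disjoint_left]
  rintro x hx hy
  obtain ⟨v, -, rfl⟩ := Finset.mem_map.mp hx
  obtain ⟨w, -, hw⟩ := Finset.mem_map.mp hy
  exact Sum.inr_ne_inl (toLex.injective hw)

/-- The join `X ∗ Y` of two abstract simplicial complexes on disjoint vertex sets:
its faces are exactly the unions `σ ∪ τ` with `σ ∈ X ∪ {∅}` and `τ ∈ Y ∪ {∅}`
(`X` and `Y` are taken to contain `∅`). -/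
def joinK (X : Finset V → Prop) (Y : Finset W → Prop) : Finset (Lex (V ⊕ W)) → Prop :=
  fun u => ∃ s t, X s ∧ Y t ∧ u = s.map embL ∪ t.map embR

end Join

section JoinMaps

variable {W : Type*} [Fintype W] [LinearOrder W]
variable {X : Finset V → Prop} {Y : Finset W → Prop} {a b : ℕ}

/-- The basis face `σ ⊗ τ := σ ∪ τ` of the join complex associated with faces
`σ ∈ X` and `τ ∈ Y` (all vertices of `σ` precede those of `τ`). -/
noncomputable def ju (σ : {s : Finset V // s.card = a ∧ X s}) (τ : {t : Finset W // t.card = b ∧ Y t}) :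
    {u : Finset (Lex (V ⊕ W)) // u.card = a + b ∧ joinK X Y u} :=
  ⟨σ.1.map embL ∪ τ.1.map embR,
    by rw [Finset.card_union_of_disjoint (mapEmb_disjoint σ.1 τ.1), Finset.card_map,
        Finset.card_map, σ.2.1, τ.2.1],
    ⟨σ.1, τ.1, σ.2.2, τ.2.2, rfl⟩⟩

/-- The linear map `(·) ⊗ τ : C_a(X) → C_{a+b}(X ∗ Y)` sending a chain on `X` to its
join with the fixed face `τ` of `Y`. -/
noncomputable def Jright (τ : {t : Finset W // t.card = b ∧ Y t}) :
    Cc F X a →ₗ[F] Cc F (joinK X Y) (a + b) :=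
  Finsupp.lsum F fun s => LinearMap.toSpanSingleton F _ (Finsupp.single (ju s τ) 1)

/-- The linear map `σ ⊗ (·) : C_b(Y) → C_{a+b}(X ∗ Y)` sending a chain on `Y` to its
join with the fixed face `σ` of `X`. -/
noncomputable def Jleft (σ : {s : Finset V // s.card = a ∧ X s}) :
    Cc F Y b →ₗ[F] Cc F (joinK X Y) (a + b) :=
  Finsupp.lsum F fun t => LinearMap.toSpanSingleton F _ (Finsupp.single (ju σ t) 1)

end JoinMaps

set_option linter.unusedSectionVars false

section JoinLaplacian

variable {W : Type*} [Fintype W] [LinearOrder W] {X : Finset V → Prop} {Y : Finset W → Prop}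
  {a b c : ℕ}

/-- `u` as a chain, or `0` when it is not a face of `K` of cardinality `c`: this absorbs the
face conditions in `upC` and `downC`, whose values on a basis face become plain sums. -/
noncomputable def faceChain (K : Finset V → Prop) (c : ℕ) (u : Finset V) : Cc F K c :=
  if h : u.card = c ∧ K u then Finsupp.single ⟨u, h⟩ 1 else 0

lemma faceChain_val (K : Finset V → Prop) (s : {s : Finset V // s.card = c ∧ K s}) :
    faceChain F K c s.1 = Finsupp.single s 1 :=
  dif_pos s.2

lemma upC_single (K : Finset V → Prop) (t : {t : Finset V // t.card = c ∧ K t}) :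
    upC F K c (Finsupp.single t 1) = ∑ x : V,
      if x ∉ t.1 then (-1 : F) ^ (t.1.filter (· < x)).card • faceChain F K (c + 1) (insert x t.1)
      else 0 := by
  simp only [upC, lsum_single, LinearMap.toSpanSingleton_apply, one_smul]
  refine Finset.sum_congr rfl fun x _ => ?_
  unfold faceChain
  split_ifs <;> first | rfl | simp_all [Finset.card_insert_of_notMem, t.2.1]

lemma downC_single (K : Finset V → Prop) (s : {s : Finset V // s.card = c + 1 ∧ K s}) :
    downC F K c (Finsupp.single s 1) =
      ∑ x ∈ s.1, (-1 : F) ^ (s.1.filter (· < x)).card • faceChain F K c (s.1.erase x) := by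
  simp only [downC, lsum_single, LinearMap.toSpanSingleton_apply, one_smul]
  rw [← Finset.sum_attach s.1]
  refine Finset.sum_congr rfl fun x _ => ?_
  unfold faceChain
  split_ifs <;> first | rfl | simp_all [Finset.card_erase_of_mem x.2, s.2.1]

lemma embL_apply (v : V) : (embL v : Lex (V ⊕ W)) = toLex (Sum.inl v) := rfl

lemma embR_apply (w : W) : (embR w : Lex (V ⊕ W)) = toLex (Sum.inr w) := rfl

noncomputable def joinFinset (s : Finset V) (t : Finset W) : Finset (Lex (V ⊕ W)) :=
  s.map embL ∪ t.map embR

lemma embL_mem_joinFinset {s : Finset V} {t : Finset W} {v : V} :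
    embL v ∈ joinFinset s t ↔ v ∈ s := by
  simp [joinFinset, embL_apply, embR_apply]

lemma embR_mem_joinFinset {s : Finset V} {t : Finset W} {w : W} :
    embR w ∈ joinFinset s t ↔ w ∈ t := by
  simp [joinFinset, embL_apply, embR_apply]

lemma joinFinset_inj {s s' : Finset V} {t t' : Finset W} :
    joinFinset s t = joinFinset s' t' ↔ s = s' ∧ t = t' := by
  refine ⟨fun h => ⟨?_, ?_⟩, fun h => h.1 ▸ h.2 ▸ rfl⟩
  · ext v
    rw [← embL_mem_joinFinset (t := t), h, embL_mem_joinFinset]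
  · ext w
    rw [← embR_mem_joinFinset (s := s), h, embR_mem_joinFinset]

lemma joinK_joinFinset {s : Finset V} {t : Finset W} :
    joinK X Y (joinFinset s t) ↔ X s ∧ Y t := by
  refine ⟨fun ⟨s', t', hs', ht', h⟩ => ?_, fun ⟨hs, ht⟩ => ⟨s, t, hs, ht, rfl⟩⟩
  obtain ⟨rfl, rfl⟩ := joinFinset_inj.mp h
  exact ⟨hs', ht'⟩

lemma card_joinFinset (s : Finset V) (t : Finset W) :
    (joinFinset s t).card = s.card + t.card := by
  rw [joinFinset, Finset.card_union_of_disjoint (mapEmb_disjoint s t), Finset.card_map,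
    Finset.card_map]

-- The instance is left free because `upC` and `downC` use the classical one.
lemma insert_embL_joinFinset {_ : DecidableEq (Lex (V ⊕ W))} (v : V) (s : Finset V) (t : Finset W) :
    insert (embL v) (joinFinset s t) = joinFinset (insert v s) t := by
  ext x; simp [joinFinset, or_assoc]

lemma insert_embR_joinFinset {_ : DecidableEq (Lex (V ⊕ W))} (w : W) (s : Finset V) (t : Finset W) :
    insert (embR w) (joinFinset s t) = joinFinset s (insert w t) := by
  ext x; simp [joinFinset, or_left_comm]

lemma erase_embL_joinFinset {_ : DecidableEq (Lex (V ⊕ W))} (v : V) (s : Finset V) (t : Finset W) :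
    (joinFinset s t).erase (embL v) = joinFinset (s.erase v) t := by
  ext x
  obtain ⟨v' | w', rfl⟩ := toLex.surjective x <;> simp [joinFinset, embL_apply, embR_apply]

lemma erase_embR_joinFinset {_ : DecidableEq (Lex (V ⊕ W))} (w : W) (s : Finset V) (t : Finset W) :
    (joinFinset s t).erase (embR w) = joinFinset s (t.erase w) := by
  ext x
  obtain ⟨v' | w', rfl⟩ := toLex.surjective x <;> simp [joinFinset, embL_apply, embR_apply]

lemma card_filter_lt_embL (s : Finset V) (t : Finset W) (v : V) :
    ((joinFinset s t).filter (· < embL v)).card = (s.filter (· < v)).card := by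
  have : (joinFinset s t).filter (· < embL v) = (s.filter (· < v)).map embL := by
    ext x
    rw [Finset.mem_filter]
    obtain ⟨v' | w', rfl⟩ := toLex.surjective x <;> simp [joinFinset, embL_apply, embR_apply]
  rw [this, Finset.card_map]

lemma card_filter_lt_embR (s : Finset V) (t : Finset W) (w : W) :
    ((joinFinset s t).filter (· < embR w)).card = s.card + (t.filter (· < w)).card := by
  have : (joinFinset s t).filter (· < embR w) = joinFinset s (t.filter (· < w)) := by
    ext x
    rw [Finset.mem_filter]
    obtain ⟨v' | w', rfl⟩ := toLex.surjective x <;> simp [joinFinset, embL_apply, embR_apply]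
  rw [this, card_joinFinset]

lemma sum_joinFinset {M : Type*} [AddCommMonoid M] (s : Finset V) (t : Finset W)
    (f : Lex (V ⊕ W) → M) :
    ∑ x ∈ joinFinset s t, f x = ∑ v ∈ s, f (embL v) + ∑ w ∈ t, f (embR w) := by
  rw [joinFinset, Finset.sum_union (mapEmb_disjoint s t), Finset.sum_map, Finset.sum_map]

lemma sum_univ_lex_sum {M : Type*} [AddCommMonoid M] (f : Lex (V ⊕ W) → M) :
    ∑ x, f x = ∑ v, f (embL v) + ∑ w, f (embR w) :=
  (Fintype.sum_equiv ofLex f (f ∘ toLex) fun _ => rfl).trans (Fintype.sum_sum_type _)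

-- The cardinality `c` is given by an equation rather than as `a + b`, since the Leibniz rules
-- relate chains in degrees such as `a + 1 + b` and `(a + b) + 1`.
noncomputable def joinFace (h : a + b = c) (σ : {s : Finset V // s.card = a ∧ X s})
    (τ : {t : Finset W // t.card = b ∧ Y t}) :
    {u : Finset (Lex (V ⊕ W)) // u.card = c ∧ joinK X Y u} :=
  ⟨joinFinset σ.1 τ.1, by rw [card_joinFinset, σ.2.1, τ.2.1, h],
    joinK_joinFinset.mpr ⟨σ.2.2, τ.2.2⟩⟩

noncomputable def joinChain (h : a + b = c) :
    Cc F X a →ₗ[F] Cc F Y b →ₗ[F] Cc F (joinK X Y) c :=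
  Finsupp.lsum F fun σ => LinearMap.toSpanSingleton F _
    (Finsupp.lsum F fun τ => LinearMap.toSpanSingleton F _ (Finsupp.single (joinFace h σ τ) 1))

lemma joinChain_single_single (h : a + b = c) (σ : {s : Finset V // s.card = a ∧ X s})
    (τ : {t : Finset W // t.card = b ∧ Y t}) :
    joinChain F h (Finsupp.single σ 1) (Finsupp.single τ 1) =
      Finsupp.single (joinFace h σ τ) 1 := by
  simp [joinChain]

lemma joinChain_faceChain (h : a + b = c) {s : Finset V} {t : Finset W} (hs : s.card = a)
    (ht : t.card = b) :
    joinChain F h (faceChain F X a s) (faceChain F Y b t) =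
      faceChain F (joinK X Y) c (joinFinset s t) := by
  have hcard : (joinFinset s t).card = c := by rw [card_joinFinset, hs, ht, h]
  unfold faceChain
  by_cases hst : X s ∧ Y t
  · rw [dif_pos ⟨hs, hst.1⟩, dif_pos ⟨ht, hst.2⟩, dif_pos ⟨hcard, joinK_joinFinset.mpr hst⟩,
      joinChain_single_single]
    rfl
  have hlhs : joinChain F h (if h : s.card = a ∧ X s then Finsupp.single ⟨s, h⟩ 1 else 0)
      (if h : t.card = b ∧ Y t then Finsupp.single ⟨t, h⟩ 1 else 0) = 0 := by
    rcases not_and_or.mp hst with hXs | hYt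
    · rw [dif_neg fun hs' => hXs hs'.2, map_zero, LinearMap.zero_apply]
    · rw [dif_neg (show ¬(t.card = b ∧ Y t) from fun ht' => hYt ht'.2), map_zero]
  rw [hlhs, dif_neg fun hu => hst (joinK_joinFinset.mp hu.2)]

lemma Jright_eq_joinChain (τ : {t : Finset W // t.card = b ∧ Y t}) :
    Jright F (X := X) (a := a) τ = (joinChain F rfl).flip (Finsupp.single τ 1) := by
  ext σ : 2
  simp only [Jright, lsum_comp_lsingle, LinearMap.toSpanSingleton_apply, one_smul,
    LinearMap.coe_comp, Function.comp_apply, lsingle_apply, LinearMap.flip_apply,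
    joinChain_single_single]
  rfl

lemma Jleft_eq_joinChain (σ : {s : Finset V // s.card = a ∧ X s}) :
    Jleft F (Y := Y) (b := b) σ = joinChain F rfl (Finsupp.single σ 1) := by
  ext τ : 2
  simp only [Jleft, lsum_comp_lsingle, LinearMap.toSpanSingleton_apply, one_smul,
    LinearMap.coe_comp, Function.comp_apply, lsingle_apply, joinChain_single_single]
  rfl

theorem upC_joinChain_single_single (h : a + b = c) (h₁ : a + 1 + b = c + 1)
    (h₂ : a + (b + 1) = c + 1) (σ : {s : Finset V // s.card = a ∧ X s})
    (τ : {t : Finset W // t.card = b ∧ Y t}) :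
    upC F (joinK X Y) c (joinChain F h (Finsupp.single σ 1) (Finsupp.single τ 1)) =
      joinChain F h₁ (upC F X a (Finsupp.single σ 1)) (Finsupp.single τ 1) +
        (-1 : F) ^ a • joinChain F h₂ (Finsupp.single σ 1) (upC F Y b (Finsupp.single τ 1)) := by
  rw [joinChain_single_single, upC_single, upC_single, upC_single, sum_univ_lex_sum]
  simp only [map_sum, LinearMap.sum_apply, Finset.smul_sum]
  congr 1 <;> refine Finset.sum_congr rfl fun x _ => ?_
  · simp only [joinFace, embL_mem_joinFinset, card_filter_lt_embL, insert_embL_joinFinset]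
    split_ifs with hx
    · simp
    · rw [map_smul, LinearMap.smul_apply, ← faceChain_val F Y τ,
        joinChain_faceChain F h₁ (by rw [Finset.card_insert_of_notMem hx, σ.2.1]) τ.2.1]
  · simp only [joinFace, embR_mem_joinFinset, card_filter_lt_embR, insert_embR_joinFinset]
    split_ifs with hx
    · simp
    · rw [map_smul, ← faceChain_val F X σ, smul_smul, ← pow_add, σ.2.1,
        joinChain_faceChain F h₂ σ.2.1 (by rw [Finset.card_insert_of_notMem hx, τ.2.1])]

theorem downC_joinChain_single_single (h : a + 1 + (b + 1) = c + 1) (h₁ : a + (b + 1) = c)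
    (h₂ : a + 1 + b = c) (σ : {s : Finset V // s.card = a + 1 ∧ X s})
    (τ : {t : Finset W // t.card = b + 1 ∧ Y t}) :
    downC F (joinK X Y) c (joinChain F h (Finsupp.single σ 1) (Finsupp.single τ 1)) =
      joinChain F h₁ (downC F X a (Finsupp.single σ 1)) (Finsupp.single τ 1) +
        (-1 : F) ^ (a + 1) •
          joinChain F h₂ (Finsupp.single σ 1) (downC F Y b (Finsupp.single τ 1)) := by
  rw [joinChain_single_single, downC_single, downC_single, downC_single, joinFace,
    sum_joinFinset]
  simp only [map_sum, LinearMap.sum_apply, Finset.smul_sum]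
  congr 1
  · refine Finset.sum_congr rfl fun x hx => ?_
    rw [card_filter_lt_embL, erase_embL_joinFinset, map_smul, LinearMap.smul_apply,
      ← faceChain_val F Y τ,
      joinChain_faceChain F h₁ (by rw [Finset.card_erase_of_mem hx, σ.2.1]; rfl) τ.2.1]
  · refine Finset.sum_congr rfl fun x hx => ?_
    rw [card_filter_lt_embR, erase_embR_joinFinset, map_smul, ← faceChain_val F X σ, smul_smul,
      ← pow_add, σ.2.1,
      joinChain_faceChain F h₂ σ.2.1 (by rw [Finset.card_erase_of_mem hx, τ.2.1]; rfl)]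

theorem upC_joinChain (h : a + b = c) (h₁ : a + 1 + b = c + 1) (h₂ : a + (b + 1) = c + 1)
    (v : Cc F X a) (w : Cc F Y b) :
    upC F (joinK X Y) c (joinChain F h v w) =
      joinChain F h₁ (upC F X a v) w + (-1 : F) ^ a • joinChain F h₂ v (upC F Y b w) := by
  have key : (joinChain F h).compr₂ (upC F (joinK X Y) c) =
      (joinChain F h₁).compl₁₂ (upC F X a) LinearMap.id +
        (-1 : F) ^ a • (joinChain F h₂).compl₁₂ LinearMap.id (upC F Y b) := by
    ext σ τ : 4
    simpa using upC_joinChain_single_single F h h₁ h₂ σ τ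
  simpa using LinearMap.congr_fun₂ key v w

theorem downC_joinChain (h : a + 1 + (b + 1) = c + 1) (h₁ : a + (b + 1) = c)
    (h₂ : a + 1 + b = c) (v : Cc F X (a + 1)) (w : Cc F Y (b + 1)) :
    downC F (joinK X Y) c (joinChain F h v w) =
      joinChain F h₁ (downC F X a v) w + (-1 : F) ^ (a + 1) • joinChain F h₂ v (downC F Y b w) := by
  have key : (joinChain F h).compr₂ (downC F (joinK X Y) c) =
      (joinChain F h₁).compl₁₂ (downC F X a) LinearMap.id +
        (-1 : F) ^ (a + 1) • (joinChain F h₂).compl₁₂ LinearMap.id (downC F Y b) := by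
    ext σ τ : 4
    simpa using downC_joinChain_single_single F h h₁ h₂ σ τ
  simpa using LinearMap.congr_fun₂ key v w

theorem lapCard_joinChain (h : a + 1 + (b + 1) = c + 1) (v : Cc F X (a + 1))
    (w : Cc F Y (b + 1)) :
    lapCard F (joinK X Y) (c + 1) (joinChain F h v w) =
      joinChain F h (lapCard F X (a + 1) v) w + joinChain F h v (lapCard F Y (b + 1) w) := by
  simp only [lapCard, LinearMap.add_apply, LinearMap.comp_apply, map_add]
  rw [downC_joinChain F h (by omega) (by omega), upC_joinChain F h (by omega) (by omega)]
  simp only [map_add, map_smul]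
  rw [upC_joinChain F (by omega) (by omega) (by omega), upC_joinChain F (by omega) (by omega) h,
    downC_joinChain F (by omega) (by omega) (by omega), downC_joinChain F (by omega) (by omega) h]
  have hsq : ((-1 : F) ^ a) * (-1) ^ a = 1 := by rw [← mul_pow]; simp
  linear_combination (norm := module) hsq • (joinChain F h v (upC F Y b (downC F Y b w)) +
    joinChain F h v (downC F Y (b + 1) (upC F Y (b + 1) w)))

end JoinLaplacian

theorem lap_join_tensor_general
    {W : Type*} [Fintype W] [LinearOrder W]
    (X : Finset V → Prop) (Y : Finset W → Prop)
    (i j : ℕ)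
    (σ : {s : Finset V // s.card = i + 1 ∧ X s})
    (τ : {t : Finset W // t.card = j + 1 ∧ Y t}) :
    lapCard ℝ (joinK X Y) ((i + 1) + (j + 1)) (Finsupp.single (ju σ τ) 1) =
      Jright ℝ τ (lapCard ℝ X (i + 1) (Finsupp.single σ 1)) +
        Jleft ℝ σ (lapCard ℝ Y (j + 1) (Finsupp.single τ 1)) := by
  have hστ : Finsupp.single (ju σ τ) (1 : ℝ) =
      joinChain ℝ rfl (Finsupp.single σ 1) (Finsupp.single τ 1) := by
    rw [joinChain_single_single]
    rfl
  rw [Jright_eq_joinChain, Jleft_eq_joinChain, LinearMap.flip_apply, hστ]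
  exact lapCard_joinChain ℝ (c := i + 1 + j) rfl _ _

/-- The combinatorial Laplacian of the join of two simplicial complexes acts on a tensor
(join) basis face `σ ⊗ τ` (with `σ` an `i`-simplex of `X`, `τ` a `j`-simplex of `Y`, so
`σ ⊗ τ` is a `k`-simplex with `i + j = k − 1`) by
`Δ_k^{X∗Y}(σ ⊗ τ) = (Δ_i^X σ) ⊗ τ + σ ⊗ (Δ_j^Y τ)`.
(Cardinality indexing: `lapCard K c` is the Laplacian `Δ_{c−1}` on faces of cardinality `c`;
here `σ` has cardinality `i+1` and `τ` has cardinality `j+1`.) -/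
theorem lap_join_tensor
    {W : Type*} [Fintype W] [LinearOrder W]
    (X : Finset V → Prop) (Y : Finset W → Prop)
    (hX : ∀ s t : Finset V, s ⊆ t → X t → X s) (hX0 : X ∅)
    (hY : ∀ s t : Finset W, s ⊆ t → Y t → Y s) (hY0 : Y ∅)
    (i j : ℕ)
    (σ : {s : Finset V // s.card = i + 1 ∧ X s})
    (τ : {t : Finset W // t.card = j + 1 ∧ Y t}) :
    lapCard ℝ (joinK X Y) ((i + 1) + (j + 1)) (Finsupp.single (ju σ τ) 1) =
      Jright ℝ τ (lapCard ℝ X (i + 1) (Finsupp.single σ 1)) +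
        Jleft ℝ σ (lapCard ℝ Y (j + 1) (Finsupp.single τ 1)) :=
  lap_join_tensor_general X Y i j σ τ
end

section
/- Suppose a unitary V and projector Π = |0⟩⟨0| ⊗ P block-encode H/λ, i.e., Π V Π = |0⟩⟨0| ⊗ H/λ, with V Hermitian. Let |k⟩ be an eigenstate of H with eigenvalue E_k satisfying P|k⟩ = |k⟩, and write V|0⟩|k⟩ = (E_k/λ)|0⟩|k⟩ + i√(1−|E_k/λ|²)|0k⊥⟩ with Π|0k⊥⟩ = 0. Then the walk operator W = RV with R = i(2Π − I) satisfies W|0⟩|k⟩ = i(E_k/λ)|0⟩|k⟩ + √(1−|E_k/λ|²)|0k⊥⟩, and the states (|0⟩|k⟩ ± |0k⊥⟩)/√2 are eigenvectors of W with eigenvalues ± e^{± i arcsin(E_k/λ)}. -/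
/-!
On the plane spanned by `ψ` and `φ`, the involution `V` has first column `(c, i s)`, where
`c = E/λ` and `s = √(1 - c²)`, and `V² = 1` forces its second column to be `(-i s, -c)`.
The reflection `i(2P - 1)` multiplies the `ψ`-component by `i` and the `φ`-component by `-i`,
so on that plane `W = i c + s X`, with `X` swapping `ψ` and `φ`. Hence `ψ ± φ` are eigenvectors
of `W` with eigenvalues `i c ± s = ±e^{±i arcsin c}`.
-/

open Complex

section
variable {K M : Type*} [AddCommGroup M]

theorem LinearMap.apply_eq_of_apply_apply_eq_self [Field K] [Module K M] {V : M →ₗ[K] M}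
    {ψ φ : M} {a b : K} (hVV : V (V ψ) = ψ) (hVψ : V ψ = a • ψ + b • φ) (hb : b ≠ 0) :
    V φ = (b⁻¹ * (1 - a ^ 2)) • ψ + (-a) • φ := by
  rw [hVψ, map_add, map_smul, map_smul, hVψ] at hVV
  apply smul_right_injective M hb
  dsimp only
  rw [eq_sub_of_add_eq' hVV]
  match_scalars <;> field_simp

theorem LinearMap.apply_add_eq_of_apply_eq_swap [CommRing K] [Module K M] {W : M →ₗ[K] M}
    {ψ φ : M} {α β : K} (hψ : W ψ = α • ψ + β • φ) (hφ : W φ = β • ψ + α • φ) :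
    W (ψ + φ) = (α + β) • (ψ + φ) := by
  rw [map_add, hψ, hφ]
  module

theorem LinearMap.apply_sub_eq_of_apply_eq_swap [CommRing K] [Module K M] {W : M →ₗ[K] M}
    {ψ φ : M} {α β : K} (hψ : W ψ = α • ψ + β • φ) (hφ : W φ = β • ψ + α • φ) :
    W (ψ - φ) = (α - β) • (ψ - φ) := by
  rw [map_sub, hψ, hφ]
  module

theorem LinearMap.smul_two_smul_sub_id_apply [CommRing K] [Module K M] {P : M →ₗ[K] M}
    {ψ φ : M} (hPψ : P ψ = ψ) (hPφ : P φ = 0) (ω a b : K) :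
    (ω • ((2 : K) • P - LinearMap.id) : M →ₗ[K] M) (a • ψ + b • φ) =
      (ω * a) • ψ + (-(ω * b)) • φ := by
  simp only [LinearMap.smul_apply, LinearMap.sub_apply, LinearMap.id_apply, map_add, map_smul,
    hPψ, hPφ]
  module

end

theorem Complex.exp_I_mul_arcsin {x : ℝ} (h₁ : -1 ≤ x) (h₂ : x ≤ 1) :
    exp (I * Real.arcsin x) = Real.sqrt (1 - x ^ 2) + x * I := by
  rw [mul_comm, exp_mul_I, ← ofReal_cos, ← ofReal_sin, Real.cos_arcsin, Real.sin_arcsin h₁ h₂]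

theorem Complex.exp_neg_I_mul_arcsin {x : ℝ} (h₁ : -1 ≤ x) (h₂ : x ≤ 1) :
    exp (-(I * Real.arcsin x)) = Real.sqrt (1 - x ^ 2) - x * I := by
  rw [← mul_neg, ← ofReal_neg, ← Real.arcsin_neg, exp_I_mul_arcsin (by linarith) (by linarith),
    neg_sq]
  push_cast
  ring

open scoped ComplexInnerProductSpace in
theorem qubitization_walk_eigenvectors_general
    {Hsp : Type*} [NormedAddCommGroup Hsp] [InnerProductSpace ℂ Hsp]
    (P V : Hsp →ₗ[ℂ] Hsp)
    (hVunit : V ∘ₗ V = LinearMap.id)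
    (ψ φ : Hsp)
    (hPψ : P ψ = ψ) (hPφ : P φ = 0)
    (E lam : ℝ) (hE : |E| < lam)
    (hVψ : V ψ = ((E / lam : ℝ) : ℂ) • ψ +
      (Complex.I * (Real.sqrt (1 - (E / lam) ^ 2) : ℂ)) • φ)
    (W : Hsp →ₗ[ℂ] Hsp)
    (hW : W = (Complex.I • ((2 : ℂ) • P - LinearMap.id)) ∘ₗ V) :
    W ψ = (Complex.I * ((E / lam : ℝ) : ℂ)) • ψ +
        ((Real.sqrt (1 - (E / lam) ^ 2) : ℝ) : ℂ) • φ ∧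
      W (((Real.sqrt 2)⁻¹ : ℂ) • (ψ + φ)) =
        Complex.exp (Complex.I * (Real.arcsin (E / lam) : ℂ)) •
          (((Real.sqrt 2)⁻¹ : ℂ) • (ψ + φ)) ∧
      W (((Real.sqrt 2)⁻¹ : ℂ) • (ψ - φ)) =
        (-Complex.exp (-(Complex.I * (Real.arcsin (E / lam) : ℂ)))) •
          (((Real.sqrt 2)⁻¹ : ℂ) • (ψ - φ)) := by
  set c := E / lam
  set s := Real.sqrt (1 - c ^ 2)
  have hc : |c| < 1 := by
    have hlam : 0 < lam := (abs_nonneg E).trans_lt hE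
    rwa [abs_div, abs_of_pos hlam, div_lt_one hlam]
  obtain ⟨hc₁, hc₂⟩ := abs_lt.mp hc
  have hs : (s : ℂ) ≠ 0 := ofReal_ne_zero.mpr (Real.sqrt_pos.mpr (by nlinarith)).ne'
  have hs_sq : (s : ℂ) ^ 2 = 1 - (c : ℂ) ^ 2 := by
    exact_mod_cast Real.sq_sqrt (by nlinarith)
  have hVφ : V φ = (-(I * s)) • ψ + (-(c : ℂ)) • φ := by
    rw [V.apply_eq_of_apply_apply_eq_self (by simpa using LinearMap.congr_fun hVunit ψ) hVψ
      (mul_ne_zero I_ne_zero hs), ← hs_sq]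
    congr 2
    field_simp
    linear_combination I_sq
  have hWψ : W ψ = (I * c) • ψ + (s : ℂ) • φ := by
    rw [hW, LinearMap.comp_apply, hVψ, P.smul_two_smul_sub_id_apply hPψ hPφ]
    congr 2
    linear_combination (-(s : ℂ)) * I_sq
  have hWφ : W φ = (s : ℂ) • ψ + (I * c) • φ := by
    rw [hW, LinearMap.comp_apply, hVφ, P.smul_two_smul_sub_id_apply hPψ hPφ]
    congr 2
    · linear_combination (-(s : ℂ)) * I_sq
    · ring
  refine ⟨hWψ, ?_, ?_⟩
  · rw [map_smul, W.apply_add_eq_of_apply_eq_swap hWψ hWφ, smul_comm,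
      exp_I_mul_arcsin hc₁.le hc₂.le, add_comm, mul_comm]
  · rw [map_smul, W.apply_sub_eq_of_apply_eq_swap hWψ hWφ, smul_comm,
      exp_neg_I_mul_arcsin hc₁.le hc₂.le]
    congr 2
    ring

open scoped ComplexInnerProductSpace in
/-- Qubitization.  Let `Π` be an orthogonal projector (`Π = |0⟩⟨0| ⊗ P`), `V` a Hermitian
unitary block-encoding `H/λ` (so that `V|0⟩|k⟩ = (E/λ)|0⟩|k⟩ + i√(1−(E/λ)²)|0k⊥⟩` with
`Π|0⟩|k⟩ = |0⟩|k⟩` and `Π|0k⊥⟩ = 0`).  Then the walk operator `W = i(2Π − 1)V` satisfies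
`W|0⟩|k⟩ = i(E/λ)|0⟩|k⟩ + √(1−(E/λ)²)|0k⊥⟩`, and `(|0⟩|k⟩ ± |0k⊥⟩)/√2` are eigenvectors
of `W` with eigenvalues `±e^{±i·arcsin(E/λ)}`. -/
theorem qubitization_walk_eigenvectors
    {Hsp : Type*} [NormedAddCommGroup Hsp] [InnerProductSpace ℂ Hsp] [FiniteDimensional ℂ Hsp]
    (P V : Hsp →ₗ[ℂ] Hsp)
    (hPproj : P ∘ₗ P = P) (hPsym : P.IsSymmetric)
    (hVsym : V.IsSymmetric) (hVunit : V ∘ₗ V = LinearMap.id)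
    (ψ φ : Hsp) (hψ : ‖ψ‖ = 1) (hφ : ‖φ‖ = 1)
    (hPψ : P ψ = ψ) (hPφ : P φ = 0)
    (E lam : ℝ) (hlam : 0 < lam) (hE : |E| < lam)
    (hVψ : V ψ = ((E / lam : ℝ) : ℂ) • ψ +
      (Complex.I * (Real.sqrt (1 - (E / lam) ^ 2) : ℂ)) • φ)
    (W : Hsp →ₗ[ℂ] Hsp)
    (hW : W = (Complex.I • ((2 : ℂ) • P - LinearMap.id)) ∘ₗ V) :
    W ψ = (Complex.I * ((E / lam : ℝ) : ℂ)) • ψ +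
        ((Real.sqrt (1 - (E / lam) ^ 2) : ℝ) : ℂ) • φ ∧
      W (((Real.sqrt 2)⁻¹ : ℂ) • (ψ + φ)) =
        Complex.exp (Complex.I * (Real.arcsin (E / lam) : ℂ)) •
          (((Real.sqrt 2)⁻¹ : ℂ) • (ψ + φ)) ∧
      W (((Real.sqrt 2)⁻¹ : ℂ) • (ψ - φ)) =
        (-Complex.exp (-(Complex.I * (Real.arcsin (E / lam) : ℂ)))) •
          (((Real.sqrt 2)⁻¹ : ℂ) • (ψ - φ)) :=
  qubitization_walk_eigenvectors_general P V hVunit ψ φ hPψ hPφ E lam hE hVψ W hW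
end

section
/- In the qubitization setup with projector-modified reflection, the walk operator also satisfies W|χk⊥⟩ = i(E_k/λ)|χk⊥⟩ + √(1−|E_k/λ|²)|χ⟩|k⟩ (with no factor of i on the second term). -/
/-!
Write `a = E/λ` and `b = i√(1 - a²)`, so that `a² - b² = 1`. On `span {ψ, φ}` the involution
`V` can only act by the matrix `[[a, -b], [b, -a]]`: its first column is given, and
squaring it to the identity forces the second one. Hence `Vφ = -bψ - aφ`, and the reflection
`i(2P - 1)` multiplies the `ψ`-component by `i` and the `φ`-component by `-i`.
-/

open Complex

theorem LinearMap.apply_eq_of_comp_self_eq_id {R M : Type*} [Field R] [AddCommGroup M]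
    [Module R M] {V : M →ₗ[R] M} (hV : V ∘ₗ V = LinearMap.id) {a b : R}
    (hab : a ^ 2 - b ^ 2 = 1) (hb : b ≠ 0) {ψ φ : M} (hVψ : V ψ = a • ψ + b • φ) :
    V φ = (-b) • ψ - a • φ := by
  have hVVψ : V (V ψ) = ψ := LinearMap.congr_fun hV ψ
  rw [hVψ, map_add, map_smul, map_smul, hVψ] at hVVψ
  refine smul_right_injective M hb ?_
  calc b • V φ = ψ - a • (a • ψ + b • φ) := eq_sub_of_add_eq' hVVψ
    _ = b • ((-b) • ψ - a • φ) := by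
      match_scalars
      · linear_combination -hab
      · ring

theorem Complex.sq_sub_sq_I_mul_sqrt_one_sub_sq {t : ℝ} (ht : |t| < 1) :
    (t : ℂ) ^ 2 - (I * (Real.sqrt (1 - t ^ 2) : ℂ)) ^ 2 = 1 := by
  have hs : Real.sqrt (1 - t ^ 2) ^ 2 = 1 - t ^ 2 :=
    Real.sq_sqrt (by nlinarith [sq_abs t, abs_nonneg t])
  have hsC : (Real.sqrt (1 - t ^ 2) : ℂ) ^ 2 = 1 - (t : ℂ) ^ 2 := by exact_mod_cast hs
  linear_combination (-(Real.sqrt (1 - t ^ 2) : ℂ) ^ 2) * I_sq + hsC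

theorem Complex.I_mul_sqrt_one_sub_sq_ne_zero {t : ℝ} (ht : |t| < 1) :
    I * (Real.sqrt (1 - t ^ 2) : ℂ) ≠ 0 := by
  have hs : 0 < Real.sqrt (1 - t ^ 2) :=
    Real.sqrt_pos.mpr (by nlinarith [sq_abs t, abs_nonneg t])
  exact mul_ne_zero I_ne_zero (ofReal_ne_zero.mpr hs.ne')

theorem qubitization_walk_on_perp_general
    {Hsp : Type*} [NormedAddCommGroup Hsp] [InnerProductSpace ℂ Hsp]
    (P V : Hsp →ₗ[ℂ] Hsp)
    (hVunit : V ∘ₗ V = LinearMap.id)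
    (ψ φ : Hsp)
    (hPψ : P ψ = ψ) (hPφ : P φ = 0)
    (E lam : ℝ) (hlam : 0 < lam) (hE : |E| < lam)
    (hVψ : V ψ = ((E / lam : ℝ) : ℂ) • ψ +
      (Complex.I * (Real.sqrt (1 - (E / lam) ^ 2) : ℂ)) • φ)
    (W : Hsp →ₗ[ℂ] Hsp)
    (hW : W = (Complex.I • ((2 : ℂ) • P - LinearMap.id)) ∘ₗ V) :
    W φ = (Complex.I * ((E / lam : ℝ) : ℂ)) • φ +
      ((Real.sqrt (1 - (E / lam) ^ 2) : ℝ) : ℂ) • ψ := by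
  have ht : |E / lam| < 1 := by
    rwa [abs_div, abs_of_pos hlam, div_lt_one hlam]
  have hVφ := LinearMap.apply_eq_of_comp_self_eq_id hVunit
    (sq_sub_sq_I_mul_sqrt_one_sub_sq ht) (I_mul_sqrt_one_sub_sq_ne_zero ht) hVψ
  rw [hW]
  simp only [LinearMap.comp_apply, LinearMap.smul_apply, LinearMap.sub_apply,
    LinearMap.id_apply, hVφ, map_sub, map_smul, hPψ, hPφ, smul_zero]
  match_scalars
  · linear_combination (-(Real.sqrt (1 - (E / lam) ^ 2) : ℂ)) * I_sq
  · ring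

/-- In the qubitization setup with projector-modified reflection, the walk operator
`W = i(2Π − 1)V` also satisfies
`W|χk⊥⟩ = i(E/λ)|χk⊥⟩ + √(1−(E/λ)²)|χ⟩|k⟩` (no factor of `i` on the second term). -/
theorem qubitization_walk_on_perp
    {Hsp : Type*} [NormedAddCommGroup Hsp] [InnerProductSpace ℂ Hsp] [FiniteDimensional ℂ Hsp]
    (P V : Hsp →ₗ[ℂ] Hsp)
    (hPproj : P ∘ₗ P = P) (hPsym : P.IsSymmetric)
    (hVsym : V.IsSymmetric) (hVunit : V ∘ₗ V = LinearMap.id)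
    (ψ φ : Hsp) (hψ : ‖ψ‖ = 1) (hφ : ‖φ‖ = 1)
    (hPψ : P ψ = ψ) (hPφ : P φ = 0)
    (E lam : ℝ) (hlam : 0 < lam) (hE : |E| < lam)
    (hVψ : V ψ = ((E / lam : ℝ) : ℂ) • ψ +
      (Complex.I * (Real.sqrt (1 - (E / lam) ^ 2) : ℂ)) • φ)
    (W : Hsp →ₗ[ℂ] Hsp)
    (hW : W = (Complex.I • ((2 : ℂ) • P - LinearMap.id)) ∘ₗ V) :
    W φ = (Complex.I * ((E / lam : ℝ) : ℂ)) • φ +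
      ((Real.sqrt (1 - (E / lam) ^ 2) : ℝ) : ℂ) • ψ :=
  qubitization_walk_on_perp_general P V hVunit ψ φ hPψ hPφ E lam hlam hE hVψ W hW
end
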